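/- arXiv:1501.04600 — 5 statements merged into one kernel-verified Lean document; each statement's English description precedes it below -/
import Mathlib

section
/- Let ℓ be a prime, m, n ≥ 1, g an endomorphism of ℤ_ℓ^m with characteristic polynomial p_g, and λ ∈ ℤ_ℓ, w ∈ ℤ_ℓ^m with g·w ≡ λ·w (mod ℓ^n). If at least one coordinate of w has ℓ-adic valuation at most b, then p_g(λ) ≡ 0 (mod ℓ^{n−b}). -/
/-!
Put `A = λ·1 - g`, so that `p_g(λ) = det A`. Since `adj A · A = det A · 1`, we get
`p_g(λ) · w = adj A · (A w)`, and every coordinate of `A w = -(g w - λ w)` is divisible by `ℓ^n`;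
hence `ℓ^n ∣ p_g(λ) · w_i` for every `i`. As `ℤ_ℓ` is a discrete valuation ring, a coordinate `w_i`
of valuation at most `b` divides `ℓ^b`, so `ℓ^n ∣ p_g(λ) · ℓ^b`, and cancelling `ℓ^b` leaves `ℓ^{n-b} ∣ p_g(λ)`.
-/

open Matrix

theorem pow_sub_dvd_of_pow_dvd_mul_pow {M₀ : Type*} [CommMonoidWithZero M₀] [IsCancelMulZero M₀]
    {a d : M₀} (ha : a ≠ 0) {n b : ℕ} (h : a ^ n ∣ d * a ^ b) : a ^ (n - b) ∣ d := by
  rcases le_total n b with hnb | hbn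
  · simp [Nat.sub_eq_zero_of_le hnb]
  · rw [← Nat.sub_add_cancel hbn, pow_add] at h
    exact (mul_dvd_mul_iff_right (pow_ne_zero b ha)).mp h

theorem IsDiscreteValuationRing.dvd_pow_of_not_pow_succ_dvd {R : Type*} [CommRing R] [IsDomain R]
    [IsDiscreteValuationRing R] {ϖ x : R} (hϖ : Irreducible ϖ) {b : ℕ}
    (hx : ¬ ϖ ^ (b + 1) ∣ x) : x ∣ ϖ ^ b := by
  have hx0 : x ≠ 0 := by rintro rfl; exact hx (dvd_zero _)
  obtain ⟨k, u, rfl⟩ := eq_unit_mul_pow_irreducible hx0 hϖ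
  have hkb : k ≤ b := by
    by_contra! hbk
    exact hx (Dvd.dvd.mul_left (pow_dvd_pow ϖ hbk) _)
  exact Units.mul_left_dvd.mpr (pow_dvd_pow ϖ hkb)

namespace Matrix

theorem dvd_mulVec_apply {m n R : Type*} [Fintype n] [CommSemiring R] {c : R} {v : n → R}
    (hv : ∀ j, c ∣ v j) (M : Matrix m n R) (i : m) : c ∣ (M *ᵥ v) i :=
  Finset.dvd_sum fun j _ => (hv j).mul_left _

variable {n R : Type*} [Fintype n] [DecidableEq n] [CommRing R]

theorem eval_charpoly_smul_eq_neg_adjugate_mulVec (g : Matrix n n R) (lam : R) (w : n → R) :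
    g.charpoly.eval lam • w = -((scalar n lam - g).adjugate *ᵥ (g *ᵥ w - lam • w)) := by
  have hAw : (scalar n lam - g) *ᵥ w = -(g *ᵥ w - lam • w) := by
    rw [sub_mulVec, scalar_apply, ← smul_one_eq_diagonal, smul_mulVec, one_mulVec, neg_sub]
  rw [← mulVec_neg, ← hAw, mulVec_mulVec, adjugate_mul, smul_mulVec, one_mulVec, eval_charpoly]

theorem dvd_eval_charpoly_mul_of_dvd_mulVec_sub_smul {g : Matrix n n R} {lam c : R} {w : n → R}
    (hcong : ∀ i, c ∣ (g *ᵥ w - lam • w) i) (i : n) : c ∣ g.charpoly.eval lam * w i := by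
  have h := congr_fun (eval_charpoly_smul_eq_neg_adjugate_mulVec g lam w) i
  rw [Pi.smul_apply, smul_eq_mul] at h
  rw [h, Pi.neg_apply, dvd_neg]
  exact dvd_mulVec_apply hcong _ i

end Matrix

theorem charpoly_approx_eigenvalue_general (p : ℕ) [Fact p.Prime] (m : ℕ)
    (n b : ℕ)
    (g : Matrix (Fin m) (Fin m) ℤ_[p]) (lam : ℤ_[p]) (w : Fin m → ℤ_[p])
    (hcong : ∀ i, (p : ℤ_[p]) ^ n ∣ (g.mulVec w - lam • w) i)
    (hw : ∃ i, ¬ ((p : ℤ_[p]) ^ (b + 1) ∣ w i)) :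
    (p : ℤ_[p]) ^ (n - b) ∣ g.charpoly.eval lam := by
  obtain ⟨i, hi⟩ := hw
  have hwi : w i ∣ (p : ℤ_[p]) ^ b :=
    IsDiscreteValuationRing.dvd_pow_of_not_pow_succ_dvd PadicInt.irreducible_p hi
  have hdvd : (p : ℤ_[p]) ^ n ∣ g.charpoly.eval lam * (p : ℤ_[p]) ^ b :=
    (dvd_eval_charpoly_mul_of_dvd_mulVec_sub_smul hcong i).trans (mul_dvd_mul_left _ hwi)
  exact pow_sub_dvd_of_pow_dvd_mul_pow PadicInt.irreducible_p.ne_zero hdvd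

/-- If `g · w ≡ λ · w (mod ℓ^n)` coordinatewise and some coordinate of `w`
has `ℓ`-adic valuation at most `b`, then the characteristic polynomial of `g`
vanishes at `λ` modulo `ℓ^{n-b}`. -/
theorem charpoly_approx_eigenvalue (p : ℕ) [Fact p.Prime] (m : ℕ) (hm : 1 ≤ m)
    (n b : ℕ) (hn : 1 ≤ n)
    (g : Matrix (Fin m) (Fin m) ℤ_[p]) (lam : ℤ_[p]) (w : Fin m → ℤ_[p])
    (hcong : ∀ i, (p : ℤ_[p]) ^ n ∣ (g.mulVec w - lam • w) i)
    (hw : ∃ i, ¬ ((p : ℤ_[p]) ^ (b + 1) ∣ w i)) :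
    (p : ℤ_[p]) ^ (n - b) ∣ g.charpoly.eval lam :=
  charpoly_approx_eigenvalue_general p m n b g lam w hcong hw
end

section
/- Let ℓ be a prime, k ≥ 1, n ≥ 0, and let b₁,…,b_k, y₁,…,y_k ∈ ℤ_ℓ^k. Suppose each y_i ≡ 0 (mod ℓ^{n+1}) and the ℤ_ℓ-submodule of ℤ_ℓ^k generated by b₁,…,b_k, y₁,…,y_k contains ℓ^n ℤ_ℓ^k. Then the submodule generated by b₁,…,b_k alone contains ℓ^n ℤ_ℓ^k. -/
/-!
Let `N := ℓ^n ℤ_ℓ^k`, which is finitely generated. Each `y_i` lies in `ℓ^{n+1} ℤ_ℓ^k = ℓ • N`,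
so the hypothesis gives `N ≤ span b ⊔ ℓ • N`. Since `ℓ` lies in the maximal ideal of the local
ring `ℤ_ℓ`, Nakayama's lemma yields `N ≤ span b`.
-/

open scoped Pointwise

theorem Submodule.le_of_le_sup_of_le_smul_of_mem_jacobson_bot {R M : Type*} [CommRing R]
    [AddCommGroup M] [Module R M] {N N' S : Submodule R M} {a : R} (hN' : N'.FG)
    (ha : a ∈ Ideal.jacobson ⊥) (hN'S : N' ≤ N ⊔ S) (hS : S ≤ a • N') : N' ≤ N := by
  refine le_of_le_smul_of_le_jacobson_bot hN' (Ideal.span_singleton_le_iff_mem _ |>.2 ha) ?_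
  rw [ideal_span_singleton_smul]
  exact hN'S.trans (sup_le_sup_left hS N)

theorem Pi.mem_smul_top_iff_forall_dvd {ι R : Type*} [CommSemiring R] (a : R) (x : ι → R) :
    x ∈ a • (⊤ : Submodule R (ι → R)) ↔ ∀ i, a ∣ x i := by
  simp only [Submodule.mem_smul_pointwise_iff_exists, Submodule.mem_top, true_and, funext_iff,
    Pi.smul_apply, smul_eq_mul, dvd_def, eq_comm (b := x _)]
  exact ⟨fun ⟨c, hc⟩ i => ⟨c i, hc i⟩, Classical.skolem.mp⟩

theorem span_b_contains_pow_smul_general (p : ℕ) [Fact p.Prime] (k n : ℕ)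
    (b y : Fin k → (Fin k → ℤ_[p]))
    (hy : ∀ i j, (p : ℤ_[p]) ^ (n + 1) ∣ y i j)
    (hspan : ∀ x : Fin k → ℤ_[p], (∀ i, (p : ℤ_[p]) ^ n ∣ x i) →
      x ∈ Submodule.span ℤ_[p] (Set.range b ∪ Set.range y)) :
    ∀ x : Fin k → ℤ_[p], (∀ i, (p : ℤ_[p]) ^ n ∣ x i) →
      x ∈ Submodule.span ℤ_[p] (Set.range b) := by
  have hN : (p : ℤ_[p]) ^ n • (⊤ : Submodule ℤ_[p] (Fin k → ℤ_[p])) ≤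
      Submodule.span ℤ_[p] (Set.range b) := by
    refine Submodule.le_of_le_sup_of_le_smul_of_mem_jacobson_bot (a := p)
      (S := Submodule.span ℤ_[p] (Set.range y)) ?_
      (IsLocalRing.maximalIdeal_le_jacobson _ PadicInt.p_nonunit) ?_ ?_
    · rw [Submodule.pointwise_smul_def]
      exact Module.Finite.fg_top.map _
    · intro z hz
      rw [← Submodule.span_union]
      exact hspan z ((Pi.mem_smul_top_iff_forall_dvd _ _).1 hz)
    · rw [Submodule.span_le, smul_smul, ← pow_succ']
      rintro _ ⟨i, rfl⟩
      exact (Pi.mem_smul_top_iff_forall_dvd _ _).2 (hy i)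
  exact fun x hx => hN ((Pi.mem_smul_top_iff_forall_dvd _ _).2 hx)

/-- If `y₁, …, y_k ≡ 0 (mod ℓ^{n+1})` and the `ℤ_ℓ`-submodule generated by
`b₁, …, b_k, y₁, …, y_k` contains `ℓ^n ℤ_ℓ^k`, then the submodule generated by
`b₁, …, b_k` alone contains `ℓ^n ℤ_ℓ^k`. -/
theorem span_b_contains_pow_smul (p : ℕ) [Fact p.Prime] (k n : ℕ) (hk : 1 ≤ k)
    (b y : Fin k → (Fin k → ℤ_[p]))
    (hy : ∀ i j, (p : ℤ_[p]) ^ (n + 1) ∣ y i j)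
    (hspan : ∀ x : Fin k → ℤ_[p], (∀ i, (p : ℤ_[p]) ^ n ∣ x i) →
      x ∈ Submodule.span ℤ_[p] (Set.range b ∪ Set.range y)) :
    ∀ x : Fin k → ℤ_[p], (∀ i, (p : ℤ_[p]) ^ n ∣ x i) →
      x ∈ Submodule.span ℤ_[p] (Set.range b) :=
  span_b_contains_pow_smul_general p k n b y hy hspan
end

section
/- Let ℓ be a prime, k ≥ 1, n ≥ 0, and b₁,…,b_k, y₁,…,y_k ∈ ℤ_ℓ^k with each y_i ≡ 0 (mod ℓ^{n+1}) and such that the submodule generated by all of b₁,…,b_k, y₁,…,y_k contains ℓ^n ℤ_ℓ^k. Then, with e₁,…,e_k the standard basis of ℤ_ℓ^k, there exists a ℤ_ℓ-linear endomorphism T of ℤ_ℓ^k with T(b_i) = ℓ^n e_i for all i = 1,…,k. -/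
/-!
Write `B` for the matrix with rows `bᵢ` and `Y = ℓ^(n+1) W` for the one with rows `yᵢ`. The span
hypothesis gives matrices `C`, `D` with `C B + D Y = ℓ^n`, i.e. `C B = ℓ^n (1 - ℓ D W)`. Since `ℓ`
lies in the maximal ideal of `ℤ_ℓ`, `U = 1 - ℓ D W` is invertible, so `A = U⁻¹ C` satisfies
`A B = ℓ^n`. As `ℓ^n` is not a zero divisor this forces `B A = ℓ^n`, which says that `x ↦ x A`
sends `bᵢ` to `ℓ^n eᵢ`.
-/

open Matrix IsLocalRing
open scoped nonZeroDivisors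

namespace Matrix

variable {ι R : Type*} [Fintype ι] [DecidableEq ι] [CommRing R]

theorem mul_eq_smul_one_comm {A B : Matrix ι ι R} {s : R} (hs : s ∈ R⁰)
    (h : A * B = s • 1) : B * A = s • 1 := by
  have hdetB : B.det ∈ R⁰ := by
    have : A.det * B.det ∈ R⁰ := by
      rw [← det_mul, h, det_smul, det_one, mul_one]
      exact pow_mem hs _
    exact (mul_mem_nonZeroDivisors.mp this).2
  have hzero : (B * A - s • 1) * B = 0 := by
    rw [sub_mul, Matrix.mul_assoc, h, Matrix.mul_smul, Matrix.smul_mul, Matrix.one_mul,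
      Matrix.mul_one, sub_self]
  rw [← sub_eq_zero]
  ext1 i
  exact congrFun (eq_zero_of_det_mem_nonZeroDivisors_of_vecMul_eq_zero hdetB (congrFun hzero i))

theorem isUnit_one_sub_smul_of_mem_maximalIdeal [IsLocalRing R] {x : R}
    (hx : x ∈ maximalIdeal R) (M : Matrix ι ι R) : IsUnit (1 - x • M) := by
  rw [isUnit_iff_isUnit_det]
  have hres : (residue R).mapMatrix (1 - x • M) = 1 := by
    ext i j
    simp [(residue_eq_zero_iff x).mpr hx, one_apply, apply_ite]
  by_contra hdet
  have := (residue_eq_zero_iff _).mpr ((mem_maximalIdeal _).mpr hdet)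
  rw [RingHom.map_det, hres, det_one] at this
  exact one_ne_zero this

end Matrix

open Submodule in
theorem exists_mul_add_mul_eq_smul_one_of_smul_single_mem_span {R ι ι' κ : Type*} [CommRing R]
    [Fintype ι] [Fintype ι'] [DecidableEq κ] {b : ι → κ → R} {y : ι' → κ → R} {s : R}
    (h : ∀ j, s • Pi.single j 1 ∈ span R (Set.range b ∪ Set.range y)) :
    ∃ (C : Matrix κ ι R) (D : Matrix κ ι' R), C * of b + D * of y = s • 1 := by
  have hcoeff : ∀ j, ∃ (c : ι → R) (d : ι' → R),
      ∑ i, c i • b i + ∑ i, d i • y i = s • Pi.single j 1 := by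
    intro j
    have hj := h j
    rw [span_union, mem_sup] at hj
    obtain ⟨u, hu, v, hv, huv⟩ := hj
    obtain ⟨c, rfl⟩ := (mem_span_range_iff_exists_fun R).mp hu
    obtain ⟨d, rfl⟩ := (mem_span_range_iff_exists_fun R).mp hv
    exact ⟨c, d, huv⟩
  choose C D hCD using hcoeff
  refine ⟨of C, of D, ?_⟩
  ext j r
  simpa [Matrix.mul_apply, Finset.sum_apply, Matrix.one_eq_pi_single] using congrFun (hCD j) r

theorem exists_endomorphism_sending_b_to_scaled_basis_general (p : ℕ) [Fact p.Prime]
    (k n : ℕ)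
    (b y : Fin k → (Fin k → ℤ_[p]))
    (hy : ∀ i j, (p : ℤ_[p]) ^ (n + 1) ∣ y i j)
    (hspan : ∀ x : Fin k → ℤ_[p], (∀ i, (p : ℤ_[p]) ^ n ∣ x i) →
      x ∈ Submodule.span ℤ_[p] (Set.range b ∪ Set.range y)) :
    ∃ T : (Fin k → ℤ_[p]) →ₗ[ℤ_[p]] (Fin k → ℤ_[p]),
      ∀ i, T (b i) = (p : ℤ_[p]) ^ n • (Pi.single i (1 : ℤ_[p]) : Fin k → ℤ_[p]) := by
  obtain ⟨C, D, hCD⟩ := exists_mul_add_mul_eq_smul_one_of_smul_single_mem_span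
    (b := b) (y := y) (s := (p : ℤ_[p]) ^ n) fun j => hspan _ fun i => by simp
  choose w hw using hy
  have hY : of y = (p : ℤ_[p]) ^ (n + 1) • of w := by ext i j; exact hw i j
  obtain ⟨V, hV⟩ := (isUnit_one_sub_smul_of_mem_maximalIdeal
    ((mem_maximalIdeal _).mpr PadicInt.p_nonunit) (D * of w)).exists_left_inv
  have hCB : C * of b = (p : ℤ_[p]) ^ n • (1 - (p : ℤ_[p]) • (D * of w)) := by
    rw [eq_sub_of_add_eq hCD, hY, Matrix.mul_smul, pow_succ, mul_smul, smul_sub]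
  have hleft : (V * C) * of b = (p : ℤ_[p]) ^ n • 1 := by
    rw [Matrix.mul_assoc, hCB, Matrix.mul_smul, hV]
  have hp : (p : ℤ_[p]) ^ n ∈ ℤ_[p]⁰ :=
    pow_mem (mem_nonZeroDivisors_of_ne_zero (by exact_mod_cast (Fact.out : p.Prime).ne_zero)) n
  refine ⟨vecMulLinear (V * C), fun i => (congrFun (mul_eq_smul_one_comm hp hleft) i).trans ?_⟩
  ext j
  simp [one_eq_pi_single]

/-- Under the hypotheses of the previous lemma, there moreover exists a
`ℤ_ℓ`-linear endomorphism `T` of `ℤ_ℓ^k` with `T(bᵢ) = ℓ^n eᵢ` for all `i`,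
where `e₁, …, e_k` is the standard basis. -/
theorem exists_endomorphism_sending_b_to_scaled_basis (p : ℕ) [Fact p.Prime]
    (k n : ℕ) (hk : 1 ≤ k)
    (b y : Fin k → (Fin k → ℤ_[p]))
    (hy : ∀ i j, (p : ℤ_[p]) ^ (n + 1) ∣ y i j)
    (hspan : ∀ x : Fin k → ℤ_[p], (∀ i, (p : ℤ_[p]) ^ n ∣ x i) →
      x ∈ Submodule.span ℤ_[p] (Set.range b ∪ Set.range y)) :
    ∃ T : (Fin k → ℤ_[p]) →ₗ[ℤ_[p]] (Fin k → ℤ_[p]),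
      ∀ i, T (b i) = (p : ℤ_[p]) ^ n • (Pi.single i (1 : ℤ_[p]) : Fin k → ℤ_[p]) :=
  exists_endomorphism_sending_b_to_scaled_basis_general p k n b y hy hspan
end

section
/- Let n ≥ 2, ℓ a prime, and G a closed subgroup of SL₂(ℤ_ℓ)^n. Let π_i denote the projection of G to the i-th factor. Suppose for every pair i ≠ j there is a non-negative integer s_{ij} (with s_{ij} ≥ 2 if ℓ = 2 and s_{ij} ≥ 1 if ℓ = 3) such that (π_i × π_j)(G) contains B_ℓ(s_{ij}) × B_ℓ(s_{ij}). Then G contains the product over i of B_ℓ(Σ_{j≠i} s_{ij} + (n−2)·v), where v = 1 if ℓ = 2 and v = 0 otherwise. -/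
noncomputable instance SL2Zp.topologicalSpace (p : ℕ) [Fact p.Prime] :
    TopologicalSpace (Matrix.SpecialLinearGroup (Fin 2) ℤ_[p]) :=
  inferInstanceAs (TopologicalSpace {A : Matrix (Fin 2) (Fin 2) ℤ_[p] // A.det = 1})

/-- The principal congruence subgroup `B_ℓ(s) = ker(SL₂(ℤ_ℓ) → SL₂(ℤ/ℓ^s))`,
with `B_ℓ(0) = SL₂(ℤ_ℓ)`. -/
noncomputable def congruenceSubgroup (p : ℕ) [Fact p.Prime] (s : ℕ) :
    Subgroup (Matrix.SpecialLinearGroup (Fin 2) ℤ_[p]) :=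
  (Matrix.SpecialLinearGroup.map (PadicInt.toZModPow s)).ker

/-!
Fix levels `a, b` with `b ≥ 2` if `ℓ = 2` and `b ≥ 1` if `ℓ = 3`. Then there is a unit
`u ≡ 1 mod ℓ^b` with `1 - u²` of valuation exactly `b + v`, so the commutators
`⁅upper x, diag u⁆ = upper (x (1 - u²))` (and their lower analogues) with `x ∈ ℓ^a ℤ_ℓ` give every
unipotent of level `a + b + v`. A commutator `⁅lower y, upper x⁆` equals
`lower * diag (1 - xy) * upper` with unipotent factors of level `≥ a + b + v`, which gives the
diagonal part, and the LDU decomposition then yields `B(a + b + v) ≤ ⁅B(a), B(b)⁆`.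

For a fixed coordinate `i`, the `i`-th coordinates of the elements of `G` that are trivial on a set
`S` of other coordinates form a subgroup, and commutators of elements trivial on `S` and on `T`
are trivial on `S ∪ T`. Induction on `S` thus puts `B(∑_{j ∈ S} s_{ij} + (|S| - 1) v)` in it; for
`S = {j ≠ i}` this means that `G` contains this congruence subgroup placed in coordinate `i`, and
hence the whole product.
-/

open scoped MatrixGroups commutatorElement

namespace SL2

variable {R : Type*} [CommRing R]

def upper (x : R) : SL(2, R) := ⟨!![1, x; 0, 1], by simp [Matrix.det_fin_two_of]⟩

def lower (x : R) : SL(2, R) := ⟨!![1, 0; x, 1], by simp [Matrix.det_fin_two_of]⟩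

def diag (u : Rˣ) : SL(2, R) := ⟨!![(u : R), 0; 0, ↑u⁻¹], by simp [Matrix.det_fin_two_of]⟩

@[simp] theorem coe_upper (x : R) : (upper x : Matrix (Fin 2) (Fin 2) R) = !![1, x; 0, 1] := rfl

@[simp] theorem coe_lower (x : R) : (lower x : Matrix (Fin 2) (Fin 2) R) = !![1, 0; x, 1] := rfl

@[simp] theorem coe_diag (u : Rˣ) : (diag u : Matrix (Fin 2) (Fin 2) R) = !![(u : R), 0; 0, ↑u⁻¹] :=
  rfl

theorem det_eq_one (g : SL(2, R)) : g 0 0 * g 1 1 - g 0 1 * g 1 0 = 1 := by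
  rw [← Matrix.det_fin_two]; exact g.prop

theorem eq_lower_mul_diag_mul_upper (g : SL(2, R)) (u : Rˣ) (hu : (u : R) = g 0 0) :
    g = lower (g 1 0 * ↑u⁻¹) * diag u * upper (g 0 1 * ↑u⁻¹) := by
  have hdet := det_eq_one g
  have hinv := u.mul_inv
  ext i j
  fin_cases i <;> fin_cases j <;> simp <;> grind

theorem commutatorElement_upper_diag (x : R) (u : Rˣ) :
    ⁅upper x, diag u⁆ = upper (x * (1 - (u : R) ^ 2)) := by
  have hinv := u.mul_inv
  ext i j
  fin_cases i <;> fin_cases j <;>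
    simp [commutatorElement_def, Matrix.SpecialLinearGroup.coe_inv, Matrix.adjugate_fin_two]
  grind

theorem commutatorElement_lower_diag_inv (x : R) (u : Rˣ) :
    ⁅lower x, (diag u)⁻¹⁆ = lower (x * (1 - (u : R) ^ 2)) := by
  have hinv := u.mul_inv
  ext i j
  fin_cases i <;> fin_cases j <;>
    simp [commutatorElement_def, Matrix.SpecialLinearGroup.coe_inv, Matrix.adjugate_fin_two]
  grind

theorem commutatorElement_lower_upper (x y : R) (δ : Rˣ) (hδ : (δ : R) = 1 - x * y) :
    ⁅lower y, upper x⁆ = lower (-(x * y ^ 2) * ↑δ⁻¹) * diag δ * upper (x ^ 2 * y * ↑δ⁻¹) := by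
  have hinv := δ.mul_inv
  ext i j
  fin_cases i <;> fin_cases j <;>
    simp [commutatorElement_def, Matrix.SpecialLinearGroup.coe_inv, Matrix.adjugate_fin_two] <;>
    grind

end SL2

namespace PadicInt

variable {p : ℕ} [Fact p.Prime]

theorem not_isUnit_iff_dvd {z : ℤ_[p]} : ¬IsUnit z ↔ (p : ℤ_[p]) ∣ z := by
  rw [not_isUnit_iff, norm_lt_one_iff_dvd]

theorem isUnit_add_of_dvd {u z : ℤ_[p]} (hu : IsUnit u) (hz : (p : ℤ_[p]) ∣ z) :
    IsUnit (u + z) := by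
  by_contra h
  exact not_isUnit_iff_dvd.2 (by simpa using dvd_sub (not_isUnit_iff_dvd.1 h) hz) hu

theorem isUnit_natCast_iff {k : ℕ} : IsUnit (k : ℤ_[p]) ↔ ¬p ∣ k := by
  rw [← norm_natCast_lt_one_iff, ← not_isUnit_iff, not_not]

end PadicInt

def IsAdmissibleLevel (p b : ℕ) : Prop := (p = 2 → 2 ≤ b) ∧ (p = 3 → 1 ≤ b)

section Padic

variable {p : ℕ} [Fact p.Prime]

open PadicInt

theorem exists_unit_sub_one_dvd_and_one_sub_sq_dvd {b : ℕ} (hb : IsAdmissibleLevel p b) :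
    ∃ u : ℤ_[p]ˣ, (p : ℤ_[p]) ^ b ∣ ↑u - 1 ∧
      1 - (u : ℤ_[p]) ^ 2 ∣ (p : ℤ_[p]) ^ (b + if p = 2 then 1 else 0) := by
  have hp := (Fact.out : p.Prime)
  have hunit_prime {q : ℕ} (hq : q.Prime) (hpq : p ≠ q) : IsUnit (q : ℤ_[p]) :=
    isUnit_natCast_iff.2 fun h ↦ hpq ((Nat.prime_dvd_prime_iff_eq hp hq).1 h)
  by_cases hp2 : p = 2
  · obtain ⟨c, rfl⟩ : ∃ c, b = c + 2 := ⟨b - 2, by have := hb.1 hp2; omega⟩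
    have hu : IsUnit (1 + (p : ℤ_[p]) ^ (c + 2)) :=
      isUnit_add_of_dvd isUnit_one (dvd_pow_self _ (by omega))
    have hw : IsUnit (1 + (p : ℤ_[p]) ^ (c + 1)) :=
      isUnit_add_of_dvd isUnit_one (dvd_pow_self _ (by omega))
    have h2 : (p : ℤ_[p]) = 2 := by exact_mod_cast hp2
    have : 1 - (1 + (p : ℤ_[p]) ^ (c + 2)) ^ 2 = p ^ (c + 2 + 1) * -(1 + p ^ (c + 1)) := by
      linear_combination (p : ℤ_[p]) ^ (c + 2) * h2
    refine ⟨hu.unit, by simp, ?_⟩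
    rw [hu.unit_spec, this, if_pos hp2]
    exact hw.neg.mul_right_dvd.2 dvd_rfl
  · have h2 : IsUnit (2 : ℤ_[p]) := by exact_mod_cast hunit_prime Nat.prime_two hp2
    obtain ⟨hu, hw⟩ : IsUnit (1 + (p : ℤ_[p]) ^ b) ∧ IsUnit (2 + (p : ℤ_[p]) ^ b) := by
      rcases Nat.eq_zero_or_pos b with rfl | hb0
      · have h3 : IsUnit (3 : ℤ_[p]) := by
          exact_mod_cast hunit_prime Nat.prime_three fun h ↦ by have := hb.2 h; omega
        norm_num [h2, h3]
      · exact ⟨isUnit_add_of_dvd isUnit_one (dvd_pow_self _ hb0.ne'),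
          isUnit_add_of_dvd h2 (dvd_pow_self _ hb0.ne')⟩
    have : 1 - (1 + (p : ℤ_[p]) ^ b) ^ 2 = p ^ (b + 0) * -(2 + p ^ b) := by ring
    refine ⟨hu.unit, by simp, ?_⟩
    rw [hu.unit_spec, this, if_neg hp2]
    exact hw.neg.mul_right_dvd.2 dvd_rfl

theorem mem_congruenceSubgroup_iff {s : ℕ} {g : SL(2, ℤ_[p])} :
    g ∈ congruenceSubgroup p s ↔
      ∀ i j, (p : ℤ_[p]) ^ s ∣ g i j - (1 : Matrix (Fin 2) (Fin 2) ℤ_[p]) i j := by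
  simp only [congruenceSubgroup, MonoidHom.mem_ker, Matrix.SpecialLinearGroup.ext_iff,
    Matrix.SpecialLinearGroup.map_apply_coe, RingHom.mapMatrix_apply, Matrix.map_apply,
    Matrix.SpecialLinearGroup.coe_one, ← Ideal.mem_span_singleton, ← ker_toZModPow,
    RingHom.mem_ker, map_sub, sub_eq_zero]
  simp only [Matrix.one_apply, apply_ite (toZModPow s), map_one, map_zero]

theorem upper_mem_congruenceSubgroup {s : ℕ} {x : ℤ_[p]} (hx : (p : ℤ_[p]) ^ s ∣ x) :
    SL2.upper x ∈ congruenceSubgroup p s := by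
  rw [mem_congruenceSubgroup_iff]
  intro i j
  fin_cases i <;> fin_cases j <;> simp [hx]

theorem lower_mem_congruenceSubgroup {s : ℕ} {x : ℤ_[p]} (hx : (p : ℤ_[p]) ^ s ∣ x) :
    SL2.lower x ∈ congruenceSubgroup p s := by
  rw [mem_congruenceSubgroup_iff]
  intro i j
  fin_cases i <;> fin_cases j <;> simp [hx]

theorem diag_mem_congruenceSubgroup {s : ℕ} {u : ℤ_[p]ˣ} (hu : (p : ℤ_[p]) ^ s ∣ ↑u - 1) :
    SL2.diag u ∈ congruenceSubgroup p s := by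
  have hinv : ((u⁻¹ : ℤ_[p]ˣ) : ℤ_[p]) - 1 = -↑u⁻¹ * (↑u - 1) := by
    linear_combination u.inv_mul
  rw [mem_congruenceSubgroup_iff]
  intro i j
  fin_cases i <;> fin_cases j <;> simp [hu, hinv, hu.mul_left]

theorem isUnit_apply_zero_zero {s : ℕ} (hs : s ≠ 0) {g : SL(2, ℤ_[p])}
    (hg : g ∈ congruenceSubgroup p s) : IsUnit (g 0 0) := by
  have h := (dvd_pow_self _ hs).trans (mem_congruenceSubgroup_iff.1 hg 0 0)
  simpa using isUnit_add_of_dvd isUnit_one h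

theorem congruenceSubgroup_le_of_forall_mem {t : ℕ} {H : Subgroup SL(2, ℤ_[p])}
    (hU : ∀ x : ℤ_[p], (p : ℤ_[p]) ^ t ∣ x → SL2.upper x ∈ H)
    (hL : ∀ x : ℤ_[p], (p : ℤ_[p]) ^ t ∣ x → SL2.lower x ∈ H)
    (hD : ∀ u : ℤ_[p]ˣ, (p : ℤ_[p]) ^ t ∣ ↑u - 1 → SL2.diag u ∈ H) :
    congruenceSubgroup p t ≤ H := by
  have hLDU : ∀ g ∈ congruenceSubgroup p t, IsUnit (g 0 0) → g ∈ H := by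
    intro g hg hunit
    have hg := mem_congruenceSubgroup_iff.1 hg
    rw [SL2.eq_lower_mul_diag_mul_upper g hunit.unit hunit.unit_spec]
    refine mul_mem (mul_mem (hL _ ?_) (hD _ ?_)) (hU _ ?_)
    · simpa using hg 1 0
    · simpa using hg 0 0
    · simpa using hg 0 1
  intro g hg
  by_cases hunit : IsUnit (g 0 0)
  · exact hLDU g hg hunit
  -- for `t = 0` the corner `g 0 0` need not be a unit, but then `g 1 0` is one
  obtain rfl : t = 0 := by
    by_contra ht
    exact hunit (isUnit_apply_zero_zero ht hg)
  have h00 := not_isUnit_iff_dvd.1 hunit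
  have h10 : IsUnit (g 1 0) := by
    by_contra h10
    refine not_isUnit_iff_dvd.2 ?_ (isUnit_one (M := ℤ_[p]))
    rw [← SL2.det_eq_one g]
    exact dvd_sub (h00.mul_right _) ((not_isUnit_iff_dvd.1 h10).mul_left _)
  have hmem := hLDU (SL2.upper 1 * g) (mem_congruenceSubgroup_iff.2 fun _ _ ↦ by simp)
    (by simpa [Matrix.mul_apply, add_comm] using isUnit_add_of_dvd h10 h00)
  simpa using mul_mem (inv_mem (hU 1 (by simp))) hmem

variable {b : ℕ} (a : ℕ)

theorem exists_eq_mul_one_sub_sq (hb : IsAdmissibleLevel p b) {x : ℤ_[p]}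
    (hx : (p : ℤ_[p]) ^ (a + b + if p = 2 then 1 else 0) ∣ x) :
    ∃ u : ℤ_[p]ˣ, (p : ℤ_[p]) ^ b ∣ ↑u - 1 ∧
      ∃ y, (p : ℤ_[p]) ^ a ∣ y ∧ x = y * (1 - (u : ℤ_[p]) ^ 2) := by
  obtain ⟨u, hu, c, hc⟩ := exists_unit_sub_one_dvd_and_one_sub_sq_dvd hb
  obtain ⟨d, rfl⟩ := hx
  refine ⟨u, hu, p ^ a * c * d, (dvd_mul_right _ _).mul_right _, ?_⟩
  rw [add_assoc, pow_add, hc]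
  ring

theorem upper_mem_commutator (hb : IsAdmissibleLevel p b) {x : ℤ_[p]}
    (hx : (p : ℤ_[p]) ^ (a + b + if p = 2 then 1 else 0) ∣ x) :
    SL2.upper x ∈ ⁅congruenceSubgroup p a, congruenceSubgroup p b⁆ := by
  obtain ⟨u, hu, y, hy, rfl⟩ := exists_eq_mul_one_sub_sq a hb hx
  rw [← SL2.commutatorElement_upper_diag]
  exact Subgroup.commutator_mem_commutator (upper_mem_congruenceSubgroup hy)
    (diag_mem_congruenceSubgroup hu)

theorem lower_mem_commutator (hb : IsAdmissibleLevel p b) {x : ℤ_[p]}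
    (hx : (p : ℤ_[p]) ^ (a + b + if p = 2 then 1 else 0) ∣ x) :
    SL2.lower x ∈ ⁅congruenceSubgroup p a, congruenceSubgroup p b⁆ := by
  obtain ⟨u, hu, y, hy, rfl⟩ := exists_eq_mul_one_sub_sq a hb hx
  rw [← SL2.commutatorElement_lower_diag_inv]
  exact Subgroup.commutator_mem_commutator (lower_mem_congruenceSubgroup hy)
    (inv_mem (diag_mem_congruenceSubgroup hu))

theorem diag_mem_commutator (hb : IsAdmissibleLevel p b) {δ : ℤ_[p]ˣ}
    (hδ : (p : ℤ_[p]) ^ (a + b + if p = 2 then 1 else 0) ∣ ↑δ - 1) :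
    SL2.diag δ ∈ ⁅congruenceSubgroup p a, congruenceSubgroup p b⁆ := by
  obtain ⟨c, hc⟩ := hδ
  set x : ℤ_[p] := -(p ^ (b + if p = 2 then 1 else 0) * c) with hx
  set y : ℤ_[p] := p ^ a with hy
  have hL := lower_mem_commutator a hb (x := -(x * y ^ 2) * ↑δ⁻¹)
    ⟨p ^ a * c * ↑δ⁻¹, by rw [hx, hy]; ring⟩
  have hU := upper_mem_commutator a hb (x := x ^ 2 * y * ↑δ⁻¹)
    ⟨p ^ (b + if p = 2 then 1 else 0) * c ^ 2 * ↑δ⁻¹, by rw [hx, hy]; ring⟩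
  have hC := Subgroup.commutator_mem_commutator (lower_mem_congruenceSubgroup (s := a) dvd_rfl)
    (upper_mem_congruenceSubgroup (s := b) (x := x) ⟨-(p ^ (if p = 2 then 1 else 0) * c), by ring⟩)
  rw [SL2.commutatorElement_lower_upper x y δ (by linear_combination hc)] at hC
  convert mul_mem (mul_mem (inv_mem hL) hC) (inv_mem hU) using 1
  group

theorem congruenceSubgroup_le_commutator (hb : IsAdmissibleLevel p b) :
    congruenceSubgroup p (a + b + if p = 2 then 1 else 0) ≤
      ⁅congruenceSubgroup p a, congruenceSubgroup p b⁆ :=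
  congruenceSubgroup_le_of_forall_mem (fun _ ↦ upper_mem_commutator a hb)
    (fun _ ↦ lower_mem_commutator a hb) (fun _ ↦ diag_mem_commutator a hb)

end Padic

namespace Subgroup

variable {ι : Type*} {M : ι → Type*} [∀ i, Group (M i)]

def slice (G : Subgroup (∀ i, M i)) (i : ι) (S : Set ι) : Subgroup (M i) :=
  (G ⊓ pi S fun _ ↦ ⊥).map (Pi.evalMonoidHom M i)

variable {G : Subgroup (∀ i, M i)} {i : ι}

theorem mem_slice {S : Set ι} {x : M i} :
    x ∈ G.slice i S ↔ ∃ g ∈ G, (∀ j ∈ S, g j = 1) ∧ g i = x := by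
  simp [slice, mem_pi, and_assoc]

theorem commutator_slice_le (S T : Set ι) : ⁅G.slice i S, G.slice i T⁆ ≤ G.slice i (S ∪ T) := by
  rw [commutator_le]
  rintro _ hx _ hy
  obtain ⟨g, hg, hgS, rfl⟩ := mem_slice.1 hx
  obtain ⟨h, hh, hhT, rfl⟩ := mem_slice.1 hy
  refine mem_slice.2 ⟨⁅g, h⁆, ?_, fun j hj ↦ ?_, rfl⟩
  · rw [commutatorElement_def]
    exact mul_mem (mul_mem (mul_mem hg hh) (inv_mem hg)) (inv_mem hh)
  · rcases hj with hj | hj <;> simp [commutatorElement_def, hgS, hhT, hj]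

theorem pi_le_of_le_slice_compl [DecidableEq ι] [Finite ι] {H : ∀ i, Subgroup (M i)}
    (hH : ∀ i, H i ≤ G.slice i {i}ᶜ) : pi Set.univ H ≤ G := by
  refine pi_le_iff.2 fun i ↦ map_le_iff_le_comap.2 fun x hx ↦ ?_
  obtain ⟨g, hg, hg1, hgi⟩ := mem_slice.1 (hH i hx)
  rw [mem_comap, ← hgi]
  convert hg
  ext j
  by_cases hj : j = i
  · subst hj; simp
  · simp [hj, hg1 j hj]

end Subgroup

open Finset in
theorem congruenceSubgroup_le_slice {p : ℕ} [Fact p.Prime] {ι : Type*}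
    (G : Subgroup (ι → SL(2, ℤ_[p]))) (i : ι) (s : ι → ℕ) {S : Finset ι} (hS : S.Nonempty)
    (hs : ∀ j ∈ S, IsAdmissibleLevel p (s j))
    (hG : ∀ j ∈ S, congruenceSubgroup p (s j) ≤ G.slice i {j}) :
    congruenceSubgroup p (∑ j ∈ S, s j + (#S - 1) * if p = 2 then 1 else 0) ≤ G.slice i S := by
  induction hS using Finset.Nonempty.cons_induction with
  | singleton j => simpa using hG j (mem_singleton_self j)
  | cons j S hjS hS ih =>
    have hlevel : ∑ k ∈ cons j S hjS, s k + (#(cons j S hjS) - 1) * (if p = 2 then 1 else 0) =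
        (∑ k ∈ S, s k + (#S - 1) * if p = 2 then 1 else 0) + s j + if p = 2 then 1 else 0 := by
      obtain ⟨m, hm⟩ := Nat.exists_eq_add_one.2 hS.card_pos
      rw [sum_cons, card_cons, hm, Nat.add_sub_cancel, Nat.add_sub_cancel]
      ring
    rw [hlevel, coe_cons, Set.insert_eq, Set.union_comm]
    calc _ ≤ ⁅congruenceSubgroup p _, congruenceSubgroup p (s j)⁆ :=
          congruenceSubgroup_le_commutator _ (hs j (mem_cons_self j S))
      _ ≤ ⁅G.slice i S, G.slice i {j}⁆ :=
          Subgroup.commutator_mono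
            (ih (fun k hk ↦ hs k (mem_cons_of_mem hk)) fun k hk ↦ hG k (mem_cons_of_mem hk))
            (hG j (mem_cons_self j S))
      _ ≤ _ := Subgroup.commutator_slice_le _ _

theorem goursat_ribet_sl2_general (p : ℕ) [Fact p.Prime] (n : ℕ) (hn : 2 ≤ n)
    (G : Subgroup (Fin n → Matrix.SpecialLinearGroup (Fin 2) ℤ_[p]))
    (s : Fin n → Fin n → ℕ)
    (hs2 : p = 2 → ∀ i j, i ≠ j → 2 ≤ s i j)
    (hs3 : p = 3 → ∀ i j, i ≠ j → 1 ≤ s i j)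
    (hproj : ∀ i j, i ≠ j →
      ∀ a b : Matrix.SpecialLinearGroup (Fin 2) ℤ_[p],
        a ∈ congruenceSubgroup p (s i j) → b ∈ congruenceSubgroup p (s i j) →
        ∃ g ∈ G, g i = a ∧ g j = b) :
    ∀ g : Fin n → Matrix.SpecialLinearGroup (Fin 2) ℤ_[p],
      (∀ i, g i ∈ congruenceSubgroup p
        ((∑ j ∈ Finset.univ.erase i, s i j) + (n - 2) * (if p = 2 then 1 else 0))) →
      g ∈ G := by
  intro g hg
  refine Subgroup.pi_le_of_le_slice_compl (fun i ↦ ?_) ((Subgroup.mem_pi _).2 fun i _ ↦ hg i)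
  have hne : ∀ j ∈ Finset.univ.erase i, i ≠ j := fun j hj ↦ (Finset.ne_of_mem_erase hj).symm
  have hS : (Finset.univ.erase i).Nonempty := by rw [← Finset.card_pos]; simp; omega
  have hslice := congruenceSubgroup_le_slice G i (s i) hS
    (fun j hj ↦ ⟨fun hp ↦ hs2 hp i j (hne j hj), fun hp ↦ hs3 hp i j (hne j hj)⟩)
    fun j hj x hx ↦ by
      obtain ⟨h, hG, hi, hj⟩ := hproj i j (hne j hj) x 1 hx (one_mem _)
      exact Subgroup.mem_slice.2 ⟨h, hG, by simpa using hj, hi⟩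
  have hcard : (Finset.univ.erase i).card - 1 = n - 2 := by simp; omega
  rwa [hcard, Finset.coe_erase, Finset.coe_univ, ← Set.compl_eq_univ_sdiff] at hslice

/-- Integral Goursat–Ribet lemma for `SL₂(ℤ_ℓ)^n`: a closed subgroup of
`SL₂(ℤ_ℓ)^n` whose projection onto each pair of factors `(i,j)` contains
`B_ℓ(s_{ij}) × B_ℓ(s_{ij})` contains `∏ᵢ B_ℓ(Σ_{j≠i} s_{ij} + (n−2)v)`,
where `v = 1` if `ℓ = 2` and `v = 0` otherwise. -/
theorem goursat_ribet_sl2 (p : ℕ) [Fact p.Prime] (n : ℕ) (hn : 2 ≤ n)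
    (G : Subgroup (Fin n → Matrix.SpecialLinearGroup (Fin 2) ℤ_[p]))
    (hGclosed : IsClosed (G : Set (Fin n → Matrix.SpecialLinearGroup (Fin 2) ℤ_[p])))
    (s : Fin n → Fin n → ℕ)
    (hs2 : p = 2 → ∀ i j, i ≠ j → 2 ≤ s i j)
    (hs3 : p = 3 → ∀ i j, i ≠ j → 1 ≤ s i j)
    (hproj : ∀ i j, i ≠ j →
      ∀ a b : Matrix.SpecialLinearGroup (Fin 2) ℤ_[p],
        a ∈ congruenceSubgroup p (s i j) → b ∈ congruenceSubgroup p (s i j) →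
        ∃ g ∈ G, g i = a ∧ g j = b) :
    ∀ g : Fin n → Matrix.SpecialLinearGroup (Fin 2) ℤ_[p],
      (∀ i, g i ∈ congruenceSubgroup p
        ((∑ j ∈ Finset.univ.erase i, s i j) + (n - 2) * (if p = 2 then 1 else 0))) →
      g ∈ G :=
  goursat_ribet_sl2_general p n hn G s hs2 hs3 hproj
end

section
/- Let ℓ be a prime and G a closed subgroup of GL₂(ℤ_ℓ)² (with G contained in the kernel of reduction mod 2 in each factor when ℓ = 2). Let L(G) be the ℤ_ℓ-span of Θ₂(G), where Θ₂(g₁,g₂) = (g₁ − tr(g₁)/2·Id, g₂ − tr(g₂)/2·Id). Let L₀ = {(l₁,l₂) ∈ L(G) : l₁ = 0}, identified with a ℤ_ℓ-submodule of 𝔰𝔩₂(ℤ_ℓ) via the second coordinate. If H ⊆ SL₂(ℤ_ℓ) is a subgroup such that for every g ∈ H there exists h with (h,g) ∈ G, then L₀ is stable under conjugation by H, i.e. g^{−1}·L₀·g ⊆ L₀ for all g ∈ H. -/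
/-! Conjugation by `u ∈ G` commutes with `Θ₂` because the trace is conjugation invariant, so it maps
`Θ₂(G)` into itself (sending `Θ₂(v)` to `Θ₂(u⁻¹ v u)`), hence preserves its span `L(G)`; an element of
`H` lifts to some `(h, g) ∈ G`, and conjugating `(0, l₂)` by it gives `(0, g⁻¹ l₂ g)`. -/

open Matrix

namespace Matrix

variable {n R : Type*} [Fintype n] [DecidableEq n] [CommRing R]

/-- `IsTheta v x` says `x = v - (tr v / 2) • 1`, with the `2` cleared so that it makes sense
when `2` is not invertible. -/
def IsTheta (v x : Matrix n n R) : Prop :=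
  (2 : R) • x = (2 : R) • v - v.trace • (1 : Matrix n n R)

theorem IsTheta.units_conj {v x : Matrix n n R} (h : IsTheta v x) (a : (Matrix n n R)ˣ) :
    IsTheta ((↑a⁻¹ : Matrix n n R) * v * (a : Matrix n n R))
      ((↑a⁻¹ : Matrix n n R) * x * (a : Matrix n n R)) := by
  have h' := congrArg (fun m => (↑a⁻¹ : Matrix n n R) * m * (a : Matrix n n R)) h
  simp only [Matrix.mul_sub, Matrix.sub_mul, Matrix.mul_smul, Matrix.smul_mul, Matrix.mul_one,
    ← Units.val_mul, inv_mul_cancel, Units.val_one] at h'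
  rwa [IsTheta, trace_units_conj']

/-- The set `Θ₂(G)`. -/
def thetaPairs (G : Subgroup ((Matrix n n R)ˣ × (Matrix n n R)ˣ)) :
    Set (Matrix n n R × Matrix n n R) :=
  {x | ∃ u ∈ G, IsTheta (u.1 : Matrix n n R) x.1 ∧ IsTheta (u.2 : Matrix n n R) x.2}

def conjPair (u : (Matrix n n R)ˣ × (Matrix n n R)ˣ) :
    (Matrix n n R × Matrix n n R) →ₗ[R] (Matrix n n R × Matrix n n R) :=
  (LinearMap.mulLeftRight R (↑u.1⁻¹, ↑u.1)).prodMap (LinearMap.mulLeftRight R (↑u.2⁻¹, ↑u.2))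

variable {G : Subgroup ((Matrix n n R)ˣ × (Matrix n n R)ˣ)} {u : (Matrix n n R)ˣ × (Matrix n n R)ˣ}

theorem conjPair_mem_thetaPairs (hu : u ∈ G) {x : Matrix n n R × Matrix n n R}
    (hx : x ∈ thetaPairs G) : conjPair u x ∈ thetaPairs G := by
  obtain ⟨v, hv, h₁, h₂⟩ := hx
  exact ⟨u⁻¹ * v * u, mul_mem (mul_mem (inv_mem hu) hv) hu,
    IsTheta.units_conj h₁ u.1, IsTheta.units_conj h₂ u.2⟩

theorem conjPair_mem_span_thetaPairs (hu : u ∈ G) {x : Matrix n n R × Matrix n n R}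
    (hx : x ∈ Submodule.span R (thetaPairs G)) :
    conjPair u x ∈ Submodule.span R (thetaPairs G) :=
  (Submodule.map_span_le _ _ _).mpr
    (fun _ hy => Submodule.subset_span (conjPair_mem_thetaPairs hu hy)) (Submodule.mem_map_of_mem hx)

end Matrix

theorem L0_conj_stable_general (p : ℕ) [Fact p.Prime]
    (G : Subgroup ((Matrix (Fin 2) (Fin 2) ℤ_[p])ˣ × (Matrix (Fin 2) (Fin 2) ℤ_[p])ˣ))
    (L : Submodule ℤ_[p] (Matrix (Fin 2) (Fin 2) ℤ_[p] × Matrix (Fin 2) (Fin 2) ℤ_[p]))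
    (hL : L = Submodule.span ℤ_[p]
      {x : Matrix (Fin 2) (Fin 2) ℤ_[p] × Matrix (Fin 2) (Fin 2) ℤ_[p] | ∃ u ∈ G,
        (2 : ℤ_[p]) • x.1
          = (2 : ℤ_[p]) • (u.1 : Matrix (Fin 2) (Fin 2) ℤ_[p])
            - (Matrix.trace (u.1 : Matrix (Fin 2) (Fin 2) ℤ_[p])) • (1 : Matrix (Fin 2) (Fin 2) ℤ_[p]) ∧
        (2 : ℤ_[p]) • x.2
          = (2 : ℤ_[p]) • (u.2 : Matrix (Fin 2) (Fin 2) ℤ_[p])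
            - (Matrix.trace (u.2 : Matrix (Fin 2) (Fin 2) ℤ_[p])) • (1 : Matrix (Fin 2) (Fin 2) ℤ_[p])})
    (H : Set (Matrix (Fin 2) (Fin 2) ℤ_[p]))
    (hHlift : ∀ g ∈ H, ∃ u ∈ G, (u.2 : Matrix (Fin 2) (Fin 2) ℤ_[p]) = g) :
    ∀ g ∈ H, ∀ l₂ : Matrix (Fin 2) (Fin 2) ℤ_[p],
      ((0 : Matrix (Fin 2) (Fin 2) ℤ_[p]), l₂) ∈ L →
      ((0 : Matrix (Fin 2) (Fin 2) ℤ_[p]), g⁻¹ * l₂ * g) ∈ L := by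
  intro g hg l₂ hl₂
  obtain ⟨u, hu, rfl⟩ := hHlift g hg
  replace hL : L = Submodule.span ℤ_[p] (thetaPairs G) := hL
  subst hL
  simpa [conjPair, ← coe_units_inv] using conjPair_mem_span_thetaPairs hu hl₂

/-- Let `G` be a closed subgroup of `GL₂(ℤ_ℓ)²` (contained in the kernel of
reduction mod 2 in each factor when `ℓ = 2`), `L(G)` the `ℤ_ℓ`-span of
`Θ₂(G)`, and `L₀ = {(l₁,l₂) ∈ L(G) : l₁ = 0}`.  If `H ⊆ SL₂(ℤ_ℓ)` is such that
every `g ∈ H` lifts to an element `(h,g) ∈ G`, then `L₀` is stable under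
conjugation by `H` (on the second coordinate). -/
theorem L0_conj_stable (p : ℕ) [Fact p.Prime]
    (G : Subgroup ((Matrix (Fin 2) (Fin 2) ℤ_[p])ˣ × (Matrix (Fin 2) (Fin 2) ℤ_[p])ˣ))
    (hGclosed : IsClosed (G : Set ((Matrix (Fin 2) (Fin 2) ℤ_[p])ˣ × (Matrix (Fin 2) (Fin 2) ℤ_[p])ˣ)))
    (h2 : p = 2 → ∀ u ∈ G,
      (∀ i j, (2 : ℤ_[p]) ∣ ((u.1 : Matrix (Fin 2) (Fin 2) ℤ_[p]) - 1) i j) ∧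
      (∀ i j, (2 : ℤ_[p]) ∣ ((u.2 : Matrix (Fin 2) (Fin 2) ℤ_[p]) - 1) i j))
    (L : Submodule ℤ_[p] (Matrix (Fin 2) (Fin 2) ℤ_[p] × Matrix (Fin 2) (Fin 2) ℤ_[p]))
    (hL : L = Submodule.span ℤ_[p]
      {x : Matrix (Fin 2) (Fin 2) ℤ_[p] × Matrix (Fin 2) (Fin 2) ℤ_[p] | ∃ u ∈ G,
        (2 : ℤ_[p]) • x.1
          = (2 : ℤ_[p]) • (u.1 : Matrix (Fin 2) (Fin 2) ℤ_[p])
            - (Matrix.trace (u.1 : Matrix (Fin 2) (Fin 2) ℤ_[p])) • (1 : Matrix (Fin 2) (Fin 2) ℤ_[p]) ∧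
        (2 : ℤ_[p]) • x.2
          = (2 : ℤ_[p]) • (u.2 : Matrix (Fin 2) (Fin 2) ℤ_[p])
            - (Matrix.trace (u.2 : Matrix (Fin 2) (Fin 2) ℤ_[p])) • (1 : Matrix (Fin 2) (Fin 2) ℤ_[p])})
    (H : Set (Matrix (Fin 2) (Fin 2) ℤ_[p]))
    (hHdet : ∀ g ∈ H, g.det = 1)
    (hHlift : ∀ g ∈ H, ∃ u ∈ G, (u.2 : Matrix (Fin 2) (Fin 2) ℤ_[p]) = g) :
    ∀ g ∈ H, ∀ l₂ : Matrix (Fin 2) (Fin 2) ℤ_[p],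
      ((0 : Matrix (Fin 2) (Fin 2) ℤ_[p]), l₂) ∈ L →
      ((0 : Matrix (Fin 2) (Fin 2) ℤ_[p]), g⁻¹ * l₂ * g) ∈ L :=
  L0_conj_stable_general p G L hL H hHlift
end
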